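/- arXiv:2507.09550 — 6 statements merged into one kernel-verified Lean document; each statement's English description precedes it below -/
import Mathlib

section
/- Let A be an n×n bistochastic matrix and let C = (i_1, ..., i_k) be a cycle of agents such that for each j, agent i_j assigns total probability 1 to the pair of objects {x_{i_{j+1}}, x_{i_j}} (indices mod k). Then for every j, A_{i_{j-1}, x_{i_j}} + A_{i_j, x_{i_j}} = 1; in particular, the total probability of each object x_{i_j} assigned to agents in C equals 1. -/
open Finset

/-- A strict preference over the `n` objects, given by its rank function:
`P x ≤ P y` means `x` is weakly preferred to `y` (rank `0` is best). -/
abbrev Pref (n : ℕ) := Equiv.Perm (Fin n)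

/-- The top-ranked object of a preference. -/
def topOf {n : ℕ} [NeZero n] (P : Pref n) : Fin n := P.symm 0

/-- Upper contour set of object `x` at preference `P`. -/
def UC {n : ℕ} (P : Pref n) (x : Fin n) : Finset (Fin n) :=
  Finset.univ.filter fun y => P y ≤ P x

/-- First-order stochastic dominance of lottery `l` over lottery `m` w.r.t. `P`. -/
def SDdom {n : ℕ} (P : Pref n) (l m : Fin n → ℝ) : Prop :=
  ∀ x, ∑ y ∈ UC P x, m y ≤ ∑ y ∈ UC P x, l y

/-- Strict stochastic dominance. -/
def SDstrict {n : ℕ} (P : Pref n) (l m : Fin n → ℝ) : Prop :=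
  SDdom P l m ∧ ∃ x, ∑ y ∈ UC P x, m y < ∑ y ∈ UC P x, l y

/-- Point mass at `x`. -/
def delta {n : ℕ} (x : Fin n) : Fin n → ℝ := fun y => if y = x then 1 else 0

/-- A bistochastic (doubly stochastic) matrix: a probabilistic assignment.
Row `i` is agent `i`'s lottery over objects. -/
def Bistochastic {n : ℕ} (A : Matrix (Fin n) (Fin n) ℝ) : Prop :=
  (∀ i j, 0 ≤ A i j) ∧ (∀ i, ∑ j, A i j = 1) ∧ (∀ j, ∑ i, A i j = 1)

/-- `B` SD-Pareto-dominates `A` at profile `P`. -/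
def ParetoDom {n : ℕ} (P : Fin n → Pref n) (B A : Matrix (Fin n) (Fin n) ℝ) : Prop :=
  (∀ i, SDdom (P i) (B i) (A i)) ∧ ∃ i, SDstrict (P i) (B i) (A i)

/-- `A` is SD-Pareto-efficient at `P`: no bistochastic matrix dominates it. -/
def SDEffAt {n : ℕ} (P : Fin n → Pref n) (A : Matrix (Fin n) (Fin n) ℝ) : Prop :=
  ¬ ∃ B, Bistochastic B ∧ ParetoDom P B A

/-- `A` is SD-individually rational at `P`: agent `i` (endowed with object `i`)
gets a lottery stochastically dominating the point mass at her endowment. -/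
def SDIRAt {n : ℕ} (P : Fin n → Pref n) (A : Matrix (Fin n) (Fin n) ℝ) : Prop :=
  ∀ i, SDdom (P i) (A i) (delta i)

theorem stmt0 {n k : ℕ} [NeZero k] (hk : 2 ≤ k) (A : Matrix (Fin n) (Fin n) ℝ)
    (hA : Bistochastic A) (i : ZMod k → Fin n) (hinj : Function.Injective i)
    (hpair : ∀ j : ZMod k, ∑ y ∈ ({i (j+1), i j} : Finset (Fin n)), A (i j) y = 1) :
    (∀ j : ZMod k, A (i (j-1)) (i j) + A (i j) (i j) = 1) ∧
    (∀ j : ZMod k, ∑ a ∈ Finset.univ.image i, A a (i j) = 1) := by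
  obtain ⟨hpos, hrow, hcol⟩ := hA
  haveI : Fact (1 < k) := ⟨hk⟩
  have hone : (1 : ZMod k) ≠ 0 := one_ne_zero
  -- off-support entries of cycle rows vanish
  have hzero : ∀ j : ZMod k, ∀ y : Fin n, y ≠ i (j+1) → y ≠ i j → A (i j) y = 0 := by
    intro j y h1 h2
    have hsub : ({i (j+1), i j} : Finset (Fin n)) ⊆ Finset.univ := Finset.subset_univ _
    have hrest : ∑ z ∈ Finset.univ \ ({i (j+1), i j} : Finset (Fin n)), A (i j) z = 0 := by
      have h := Finset.sum_sdiff (f := A (i j)) hsub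
      rw [hpair j, hrow (i j)] at h
      linarith
    have hy : y ∈ Finset.univ \ ({i (j+1), i j} : Finset (Fin n)) := by
      simp [h1, h2]
    exact (Finset.sum_eq_zero_iff_of_nonneg (fun z _ => hpos _ z)).mp hrest y hy
  -- each cycle row puts total mass 1 on cycle objects
  have himg : ∀ m : ZMod k, ∑ a ∈ Finset.univ.image i, A (i m) a = 1 := by
    intro m
    rw [← hpair m]
    refine (Finset.sum_subset ?_ ?_).symm
    · intro x hx
      simp only [Finset.mem_insert, Finset.mem_singleton] at hx
      rcases hx with h | h <;> simp [h]
    · intro x hx hnx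
      simp only [Finset.mem_image, Finset.mem_univ, true_and] at hx
      obtain ⟨j, rfl⟩ := hx
      simp only [Finset.mem_insert, Finset.mem_singleton, not_or] at hnx
      exact hzero m _ hnx.1 hnx.2
  have himg' : ∀ m : ZMod k, ∑ j : ZMod k, A (i m) (i j) = 1 := by
    intro m
    rw [← himg m, Finset.sum_image (fun a _ b _ h => hinj h)]
  -- entries of outside agents on cycle objects vanish
  have houter : ∀ j : ZMod k, ∀ a : Fin n, a ∉ Finset.univ.image i → A a (i j) = 0 := by
    have hsplit : ∀ j : ZMod k,
        ∑ a ∈ Finset.univ \ Finset.univ.image i, A a (i j)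
          + ∑ a ∈ Finset.univ.image i, A a (i j) = 1 := by
      intro j
      rw [Finset.sum_sdiff (Finset.subset_univ _)]
      exact hcol (i j)
    have hS : ∑ j : ZMod k, ∑ a ∈ Finset.univ \ Finset.univ.image i, A a (i j) = 0 := by
      have h1 : ∑ j : ZMod k, ∑ a ∈ Finset.univ.image i, A a (i j) = (k : ℝ) := by
        have : ∀ j : ZMod k, ∑ a ∈ Finset.univ.image i, A a (i j)
            = ∑ m : ZMod k, A (i m) (i j) := by
          intro j
          rw [Finset.sum_image (fun a _ b _ h => hinj h)]
        simp_rw [this]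
        rw [Finset.sum_comm]
        simp_rw [himg']
        simp [ZMod.card]
      have h2 : ∑ j : ZMod k, (∑ a ∈ Finset.univ \ Finset.univ.image i, A a (i j)
          + ∑ a ∈ Finset.univ.image i, A a (i j)) = (k : ℝ) := by
        simp_rw [hsplit]
        simp [ZMod.card]
      rw [Finset.sum_add_distrib, h1] at h2
      linarith
    intro j a ha
    have h1 := (Finset.sum_eq_zero_iff_of_nonneg
      (fun j _ => Finset.sum_nonneg (fun a _ => hpos a (i j)))).mp hS j (Finset.mem_univ j)
    have h2 := (Finset.sum_eq_zero_iff_of_nonneg (fun a _ => hpos a (i j))).mp h1 a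
    exact h2 (by simp [ha])
  have part2 : ∀ j : ZMod k, ∑ a ∈ Finset.univ.image i, A a (i j) = 1 := by
    intro j
    have h := hcol (i j)
    rw [← Finset.sum_sdiff (Finset.subset_univ (Finset.univ.image i)),
      Finset.sum_eq_zero (fun a ha => houter j a (Finset.mem_sdiff.mp ha).2), zero_add] at h
    exact h
  refine ⟨?_, part2⟩
  intro j
  have hsum : ∑ m : ZMod k, A (i m) (i j) = 1 := by
    rw [← part2 j]
    exact (Finset.sum_image (g := i) (f := fun a => A a (i j)) (fun a _ b _ h => hinj h)).symm
  have hpairsum : ∑ m ∈ ({j - 1, j} : Finset (ZMod k)), A (i m) (i j) = 1 := by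
    rw [← hsum]
    refine Finset.sum_subset (Finset.subset_univ _) ?_
    intro m _ hm
    simp only [Finset.mem_insert, Finset.mem_singleton, not_or] at hm
    refine hzero m (i j) (fun h => hm.1 ?_) (fun h => hm.2 (hinj h).symm)
    have hj := hinj h
    rw [hj]; ring
  have hne : j - 1 ≠ j := by
    intro h
    exact hone (sub_eq_self.mp h)
  rwa [Finset.sum_pair hne] at hpairsum
end

section
/- Let A be a bistochastic matrix, C = (i_1,...,i_k) a set of agents such that all probability mass of each object x_{i_j} is distributed among agents in C, and suppose each agent i_j in C strictly top-ranks x_{i_{j+1}} (indices mod k) among the objects {x_{i_1},...,x_{i_k}}. If A is not SD-Pareto-dominated at the profile, then A_{i_j, x_{i_{j+1}}} = 1 for every j. -/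
open Finset

/-! Let `S` be the set of agents of the cycle. The columns of `S` put all their mass on the rows
of `S`, so by double counting the rows of `S` put all their mass on the columns of `S`: each
agent `i_j` of the cycle only receives objects of `S`, among which `x_{i_{j+1}}` is her favourite.
Handing every `i_j` the sure object `x_{i_{j+1}}` and leaving the other rows untouched is again
bistochastic, and it weakly improves everybody; if some `A_{i_j, x_{i_{j+1}}} < 1` the
improvement is strict for `i_j`, contradicting efficiency. -/

namespace Bistochastic

variable {n : ℕ} {A : Matrix (Fin n) (Fin n) ℝ}

lemma apply_le_one (hA : Bistochastic A) (a x : Fin n) : A a x ≤ 1 :=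
  (single_le_sum (fun y _ => hA.1 a y) (mem_univ x)).trans_eq (hA.2.1 a)

lemma apply_eq_zero_of_notMem_of_mem (hA : Bistochastic A) {S : Finset (Fin n)}
    (hS : ∀ x ∈ S, ∑ a ∈ S, A a x = 1) {a x : Fin n} (ha : a ∉ S) (hx : x ∈ S) :
    A a x = 0 := by
  have hcompl : ∑ b ∈ Sᶜ, A b x = 0 := by
    have := sum_compl_add_sum S (fun b => A b x)
    rw [hS x hx, hA.2.2 x] at this
    linarith
  exact (sum_eq_zero_iff_of_nonneg fun b _ => hA.1 b x).1 hcompl a (mem_compl.2 ha)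

lemma apply_eq_zero_of_mem_of_notMem (hA : Bistochastic A) {S : Finset (Fin n)}
    (hS : ∀ x ∈ S, ∑ a ∈ S, A a x = 1) {a x : Fin n} (ha : a ∈ S) (hx : x ∉ S) :
    A a x = 0 := by
  have hcompl_row : ∀ b, ∑ y ∈ Sᶜ, A b y = 1 - ∑ y ∈ S, A b y := fun b => by
    rw [← hA.2.1 b, ← sum_compl_add_sum S]
    ring
  -- The rows of `S` carry total mass `#S`, all of which the columns of `S` absorb.
  have hout : ∑ b ∈ S, ∑ y ∈ Sᶜ, A b y = 0 :=
    calc ∑ b ∈ S, ∑ y ∈ Sᶜ, A b y = ∑ b ∈ S, (1 - ∑ y ∈ S, A b y) := sum_congr rfl fun b _ => hcompl_row b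
      _ = #S - ∑ y ∈ S, ∑ b ∈ S, A b y := by rw [sum_sub_distrib, sum_comm]; simp
      _ = 0 := by rw [sum_congr rfl hS]; simp
  have hrow := (sum_eq_zero_iff_of_nonneg fun b _ => sum_nonneg fun y _ => hA.1 b y).1 hout a ha
  exact (sum_eq_zero_iff_of_nonneg fun y _ => hA.1 a y).1 hrow x (mem_compl.2 hx)

/-- Rows `i j` are replaced by the point masses at `i (σ j)`: a closed block of a bistochastic
matrix may be swapped for a permutation matrix. -/
lemma extend_delta {ι : Type*} [Fintype ι] (hA : Bistochastic A) {i : ι → Fin n}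
    (hi : Function.Injective i) (σ : Equiv.Perm ι)
    (hS : ∀ x ∈ univ.image i, ∑ a ∈ univ.image i, A a x = 1) :
    Bistochastic (Function.extend i (fun j => delta (i (σ j))) fun a => A a) := by
  set S := univ.image i
  set B : Matrix (Fin n) (Fin n) ℝ := Function.extend i (fun j => delta (i (σ j))) fun a => A a
  have hB_in : ∀ j, B (i j) = delta (i (σ j)) := hi.extend_apply _ _
  have hB_out : ∀ a ∉ S, B a = A a := fun a ha =>
    Function.extend_apply' _ _ _ (by simpa [S] using ha)
  refine ⟨fun a x => ?_, fun a => ?_, fun x => ?_⟩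
  · by_cases ha : a ∈ S
    · obtain ⟨j, -, rfl⟩ := mem_image.1 ha
      rw [hB_in]
      unfold delta
      split_ifs <;> norm_num
    · rw [hB_out a ha]
      exact hA.1 a x
  · by_cases ha : a ∈ S
    · obtain ⟨j, -, rfl⟩ := mem_image.1 ha
      simp [hB_in, delta]
    · rw [hB_out a ha]
      exact hA.2.1 a
  · have hin : ∑ a ∈ S, B a x = if x ∈ S then 1 else 0 :=
      calc ∑ a ∈ S, B a x = ∑ j, delta (i (σ j)) x := by
            rw [sum_image hi.injOn]; simp only [hB_in]
        _ = ∑ j, delta (i j) x := Equiv.sum_comp σ (fun j => delta (i j) x)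
        _ = ∑ a ∈ S, delta a x := (sum_image (f := fun a => delta a x) hi.injOn).symm
        _ = if x ∈ S then 1 else 0 := sum_ite_eq S x _
    rw [← sum_compl_add_sum S, sum_congr rfl fun a ha => congrFun (hB_out a (mem_compl.1 ha)) x,
      hin]
    by_cases hx : x ∈ S
    · rw [if_pos hx, sum_eq_zero fun a ha => hA.apply_eq_zero_of_notMem_of_mem hS
        (mem_compl.1 ha) hx]
      norm_num
    · rw [if_neg hx, add_zero, ← hA.2.2 x, ← sum_compl_add_sum S (fun a => A a x),
        sum_eq_zero (s := S) fun a ha => hA.apply_eq_zero_of_mem_of_notMem hS ha hx, add_zero]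

end Bistochastic

section StochasticDominance

variable {n : ℕ} {P : Pref n} {l : Fin n → ℝ} {x : Fin n}

lemma mem_UC {y : Fin n} : y ∈ UC P x ↔ P y ≤ P x := by
  simp [UC]

lemma SDdom.refl (P : Pref n) (l : Fin n → ℝ) : SDdom P l l := fun _ => le_rfl

lemma sum_UC_delta (x z : Fin n) : ∑ y ∈ UC P z, delta x y = if P x ≤ P z then 1 else 0 := by
  simp only [delta, sum_ite_eq', mem_UC]

lemma sum_UC_self_eq_of_support (hsupp : ∀ y, l y ≠ 0 → P x ≤ P y) :
    ∑ y ∈ UC P x, l y = l x := by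
  refine sum_eq_single_of_mem x (mem_UC.2 le_rfl) fun y hy hyx => ?_
  by_contra hy0
  exact hyx (P.injective ((mem_UC.1 hy).antisymm (hsupp y hy0)))

lemma sdDom_delta_of_support (hl0 : ∀ y, 0 ≤ l y) (hl1 : ∑ y, l y = 1)
    (hsupp : ∀ y, l y ≠ 0 → P x ≤ P y) : SDdom P (delta x) l := by
  intro z
  rw [sum_UC_delta]
  split_ifs with hxz
  · exact (sum_le_sum_of_subset_of_nonneg (subset_univ _) fun y _ _ => hl0 y).trans_eq hl1
  · refine (sum_eq_zero fun y hy => ?_).le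
    by_contra hy0
    exact hxz ((hsupp y hy0).trans (mem_UC.1 hy))

lemma sdStrict_delta_of_support (hl0 : ∀ y, 0 ≤ l y) (hl1 : ∑ y, l y = 1)
    (hsupp : ∀ y, l y ≠ 0 → P x ≤ P y) (hlt : l x < 1) : SDstrict P (delta x) l := by
  refine ⟨sdDom_delta_of_support hl0 hl1 hsupp, x, ?_⟩
  rw [sum_UC_self_eq_of_support hsupp, sum_UC_delta, if_pos le_rfl]
  exact hlt

end StochasticDominance

theorem stmt3 {n k : ℕ} [NeZero k] (P : Fin n → Pref n) (A : Matrix (Fin n) (Fin n) ℝ)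
    (hA : Bistochastic A) (i : ZMod k → Fin n) (hinj : Function.Injective i)
    (hcol : ∀ j : ZMod k, ∑ a ∈ Finset.univ.image i, A a (i j) = 1)
    (htop : ∀ j j' : ZMod k, i j' ≠ i (j+1) → P (i j) (i (j+1)) < P (i j) (i j'))
    (hEff : SDEffAt P A) :
    ∀ j : ZMod k, A (i j) (i (j+1)) = 1 := by
  set S := univ.image i
  have hS : ∀ x ∈ S, ∑ a ∈ S, A a x = 1 := by
    intro x hx
    obtain ⟨j', -, rfl⟩ := mem_image.1 hx
    exact hcol j'
  have hsupp : ∀ j y, A (i j) y ≠ 0 → P (i j) (i (j+1)) ≤ P (i j) y := by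
    intro j y hy
    have hyS : y ∈ S := by_contra fun hyS =>
      hy (hA.apply_eq_zero_of_mem_of_notMem hS (mem_image_of_mem i (mem_univ j)) hyS)
    obtain ⟨j', -, rfl⟩ := mem_image.1 hyS
    by_cases h : i j' = i (j+1)
    · rw [h]
    · exact (htop j j' h).le
  intro j
  by_contra hne
  refine hEff ⟨_, hA.extend_delta hinj (Equiv.addRight 1) hS, fun a => ?_, i j, ?_⟩
  · by_cases ha : ∃ j', i j' = a
    · obtain ⟨j', rfl⟩ := ha
      rw [hinj.extend_apply]
      exact sdDom_delta_of_support (hA.1 _) (hA.2.1 _) (hsupp j')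
    · rw [Function.extend_apply' _ _ _ ha]
      exact SDdom.refl _ _
  · rw [hinj.extend_apply]
    exact sdStrict_delta_of_support (hA.1 _) (hA.2.1 _) (hsupp j)
      ((hA.apply_le_one _ _).lt_of_ne hne)
end

section
/- The Top Trading Cycles rule (with deterministic endowments E where agent i owns x_i), viewed as a probabilistic assignment rule producing permutation matrices, is SD-individually rational: for every profile, each agent's TTC assignment is weakly preferred to her endowment. -/
open Finset

/-- The most preferred object of `P` among the objects in `S`. -/
noncomputable def best {n : ℕ} (P : Pref n) (S : Finset (Fin n)) (hS : S.Nonempty) : Fin n :=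
  P.symm ((S.image fun y => P y).min' (hS.image _))

/-- One pass of the TTC algorithm with explicit fuel: repeatedly find a cycle of the
map sending each remaining agent to the owner of her most preferred remaining object
(object `j` is owned by agent `j`), trade along the cycle, and remove its members. -/
noncomputable def TTCaux {n : ℕ} (Pr : Fin n → Pref n) : ℕ → Finset (Fin n) → Fin n → Fin n
  | 0, _ => id
  | fuel+1, S =>
    if hS : S.Nonempty then
      let f : Fin n → Fin n := fun i => if i ∈ S then best (Pr i) S hS else i
      let c := f^[n] hS.choose
      let Cyc := ((Finset.range (n+1)).image fun k => f^[k] c) ∩ S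
      fun i => if i ∈ Cyc then f i else TTCaux Pr fuel (S \ Cyc) i
    else id

/-- The Top Trading Cycles rule: `TTC Pr i` is the object assigned to agent `i`
when agent `j` is endowed with object `j`. -/
noncomputable def TTC {n : ℕ} (Pr : Fin n → Pref n) : Fin n → Fin n :=
  TTCaux Pr n Finset.univ

/-- The TTC rule viewed as a probabilistic assignment rule (a permutation matrix). -/
noncomputable def TTCmat {n : ℕ} (Pr : Fin n → Pref n) : Matrix (Fin n) (Fin n) ℝ :=
  fun i j => if TTC Pr i = j then 1 else 0

lemma best_le {n : ℕ} (P : Pref n) (S : Finset (Fin n)) (hS : S.Nonempty)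
    {i : Fin n} (hi : i ∈ S) : P (best P S hS) ≤ P i := by
  unfold best
  rw [Equiv.apply_symm_apply]
  exact Finset.min'_le _ _ (Finset.mem_image.mpr ⟨i, hi, rfl⟩)

lemma ttc_ir {n : ℕ} (Pr : Fin n → Pref n) :
    ∀ fuel S (i : Fin n), i ∈ S → Pr i (TTCaux Pr fuel S i) ≤ Pr i i := by
  intro fuel
  induction fuel with
  | zero => intro S i _; exact le_refl _
  | succ k ih =>
    intro S i h
    have hS : S.Nonempty := ⟨i, h⟩
    rw [TTCaux, dif_pos hS]
    simp only
    split
    · next hc =>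
      exact best_le _ _ _ h
    · next hc =>
      exact ih _ _ (Finset.mem_sdiff.mpr ⟨h, hc⟩)

theorem stmt6 {n : ℕ} (Pr : Fin n → Pref n) (i : Fin n) :
    Pr i (TTC Pr i) ≤ Pr i i := by
  exact ttc_ir Pr n Finset.univ i (Finset.mem_univ i)
end

section
/- Suppose a probabilistic assignment rule φ is SD-Pareto-efficient, SD-individually rational, and SD-top-strategy-proof with deterministic endowments (agent i owns x_i). Let C = (i_1,...,i_k) be a cycle in the top-choice graph at profile P_N (agent i_j top-ranks x_{i_{j+1}}, indices mod k). Then φ assigns each agent i_j in C her top-ranked object x_{i_{j+1}} with probability 1 at P_N. -/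
open Finset

/-!
When every agent of the cycle reports "my top choice, then my endowment", individual
rationality and bistochasticity confine each of them to her endowment and her top choice; the
probability `c` of keeping the endowment cannot increase along the cycle, hence is constant, and
for `c > 0` trading `c` around the cycle would be an SD-Pareto improvement, so `c = 0`.
From there, reinstate the true preferences one agent at a time (induction on the set of agents
not making that report). A truthful cycle agent gets her top for sure, because switching to the
report would give it to her for sure by induction and top-strategy-proofness forbids that gain.
A reporting agent whose endowment is surely given to her predecessor cannot keep it, so
individual rationality gives her top to her. Starting from a truthful agent and walking around
the cycle covers everyone.
-/

section Preferences

variable {n : ℕ} [NeZero n]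

lemma topOf_mem_UC (P : Pref n) (x : Fin n) : topOf P ∈ UC P x := by
  simp [UC, topOf]

lemma UC_topOf (P : Pref n) : UC P (topOf P) = {topOf P} := by
  ext y
  simp [UC, topOf, Equiv.eq_symm_apply]

lemma SDdom.one_le_of_topOf_eq {P : Pref n} {l : Fin n → ℝ} {x : Fin n}
    (h : SDdom P l (delta x)) (hx : topOf P = x) : 1 ≤ l x := by
  subst hx
  simpa [UC_topOf, delta] using h (topOf P)

lemma Fin.val_one_of_ne {a b : Fin n} (h : a ≠ b) : ((1 : Fin n) : ℕ) = 1 := by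
  have : 2 ≤ n := Fin.nontrivial_iff_two_le.1 ⟨⟨a, b, h⟩⟩
  rw [Fin.val_one', Nat.mod_eq_of_lt this]

def topSecondPref (a b : Fin n) : Pref n :=
  (Equiv.swap a 0).trans (Equiv.swap (Equiv.swap a 0 b) 1)

variable {a b : Fin n}

lemma topSecondPref_apply_left (h : b ≠ a) : topSecondPref a b a = 0 := by
  have hb : Equiv.swap a 0 b ≠ 0 := fun h0 => h (by simpa using congrArg (Equiv.swap a 0) h0)
  have h1 : (0 : Fin n) ≠ 1 := fun h0 => by simpa [← h0] using Fin.val_one_of_ne h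
  simp [topSecondPref, Equiv.swap_apply_of_ne_of_ne hb.symm h1]

lemma topSecondPref_apply_right : topSecondPref a b b = 1 := by
  simp [topSecondPref]

lemma topOf_topSecondPref (h : b ≠ a) : topOf (topSecondPref a b) = a := by
  rw [topOf, Equiv.symm_apply_eq, topSecondPref_apply_left h]

lemma UC_topSecondPref_right (h : b ≠ a) : UC (topSecondPref a b) b = {a, b} := by
  ext y
  simp only [UC, mem_filter, mem_univ, true_and, mem_insert, mem_singleton,
    topSecondPref_apply_right]
  have hone := Fin.val_one_of_ne h
  constructor
  · intro hy
    rcases Nat.le_one_iff_eq_zero_or_eq_one.1 (hone ▸ Fin.le_def.1 hy) with h0 | h1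
    · left
      apply (topSecondPref a b).injective
      rw [topSecondPref_apply_left h]
      exact Fin.ext h0
    · right
      apply (topSecondPref a b).injective
      rw [topSecondPref_apply_right]
      exact Fin.ext (h1.trans hone.symm)
  · rintro (rfl | rfl)
    · rw [topSecondPref_apply_left h]; exact Fin.zero_le _
    · exact topSecondPref_apply_right.le

lemma SDdom.one_le_add_of_topSecondPref {l : Fin n → ℝ} (h : b ≠ a)
    (hl : SDdom (topSecondPref a b) l (delta b)) : 1 ≤ l a + l b := by
  simpa [UC_topSecondPref_right h, sum_pair h.symm, delta, h.symm] using hl b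

end Preferences

lemma sum_delta {n : ℕ} (s : Finset (Fin n)) (x : Fin n) :
    ∑ y ∈ s, delta x y = if x ∈ s then 1 else 0 := by
  simp [delta]

namespace Bistochastic

variable {n : ℕ} {A : Matrix (Fin n) (Fin n) ℝ}

lemma sum_row_le_one (hA : Bistochastic A) (r : Fin n) (t : Finset (Fin n)) :
    ∑ s ∈ t, A r s ≤ 1 :=
  hA.2.1 r ▸ sum_le_sum_of_subset_of_nonneg (subset_univ t) fun s _ _ => hA.1 r s

lemma sum_col_le_one (hA : Bistochastic A) (s : Fin n) (t : Finset (Fin n)) :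
    ∑ r ∈ t, A r s ≤ 1 :=
  hA.2.2 s ▸ sum_le_sum_of_subset_of_nonneg (subset_univ t) fun r _ _ => hA.1 r s

lemma le_one (hA : Bistochastic A) (r s : Fin n) : A r s ≤ 1 := by
  simpa using hA.sum_row_le_one r {s}

lemma eq_zero_of_add_eq_one (hA : Bistochastic A) {r a b s : Fin n} (hab : a ≠ b)
    (h : A r a + A r b = 1) (hsa : s ≠ a) (hsb : s ≠ b) : A r s = 0 := by
  have := hA.sum_row_le_one r {s, a, b}
  rw [sum_insert (by simp [hsa, hsb]), sum_pair hab, h] at this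
  linarith [hA.1 r s]

variable [NeZero n]

lemma SDdom_delta_topOf (hA : Bistochastic A) (P : Pref n) (r : Fin n) :
    SDdom P (delta (topOf P)) (A r) := fun x => by
  simpa [sum_delta, topOf_mem_UC] using hA.sum_row_le_one r (UC P x)

lemma eq_one_of_topSecondPref (hA : Bistochastic A) {r e t : Fin n} (hre : r ≠ e)
    (het : e ≠ t) (hIR : SDdom (topSecondPref t e) (A e) (delta e)) (hr : A r e = 1) :
    A e t = 1 := by
  have hcol := hA.sum_col_le_one e {r, e}
  rw [sum_pair hre, hr] at hcol
  linarith [hIR.one_le_add_of_topSecondPref het, hA.le_one e t, hA.1 e e]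

end Bistochastic

section Trade

variable {n : ℕ} {A : Matrix (Fin n) (Fin n) ℝ} {σ : Equiv.Perm (Fin n)} {c : ℝ}

def tradeAlong (A : Matrix (Fin n) (Fin n) ℝ) (σ : Equiv.Perm (Fin n)) (c : ℝ) :
    Matrix (Fin n) (Fin n) ℝ :=
  fun r s => A r s + c * (delta (σ r) s - delta r s)

lemma tradeAlong_apply_of_fixed {r : Fin n} (hr : σ r = r) : tradeAlong A σ c r = A r := by
  ext s
  simp [tradeAlong, hr]

lemma tradeAlong_apply_of_moved (hA : Bistochastic A) {r : Fin n} (hr : σ r ≠ r)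
    (hdiag : A r r = c) (hpair : A r r + A r (σ r) = 1) :
    tradeAlong A σ c r = delta (σ r) := by
  ext s
  by_cases hsr : s = r
  · subst hsr
    simp [tradeAlong, delta, Ne.symm hr, hdiag]
  by_cases hsσ : s = σ r
  · subst hsσ
    simp [tradeAlong, delta, hr]
    linarith
  · simp [tradeAlong, delta, hsr, hsσ, hA.eq_zero_of_add_eq_one (Ne.symm hr) hpair hsr hsσ]

lemma bistochastic_tradeAlong (hA : Bistochastic A) (hc : 0 ≤ c)
    (hdiag : ∀ r, σ r ≠ r → c ≤ A r r) : Bistochastic (tradeAlong A σ c) := by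
  refine ⟨fun r s => ?_, fun r => ?_, fun s => ?_⟩
  · by_cases hr : σ r = r
    · rw [tradeAlong_apply_of_fixed hr]
      exact hA.1 r s
    by_cases hs : s = r
    · subst hs
      simp [tradeAlong, delta, Ne.symm hr]
      linarith [hdiag s hr]
    · have : 0 ≤ delta (σ r) s := by unfold delta; split_ifs <;> norm_num
      simp only [tradeAlong, delta, if_neg hs, sub_zero] at this ⊢
      exact add_nonneg (hA.1 r s) (mul_nonneg hc this)
  · simp [tradeAlong, sum_add_distrib, ← mul_sum, sum_delta, hA.2.1 r]
  · have hperm : ∑ r, delta (σ r) s = ∑ r, delta r s := Equiv.sum_comp σ (fun r => delta r s)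
    simp only [tradeAlong, sum_add_distrib, ← mul_sum, sum_sub_distrib, hperm, hA.2.2 s]
    ring

lemma not_SDEffAt_of_tradeAlong [NeZero n] {R : Fin n → Pref n} (hA : Bistochastic A)
    (hc : 0 < c) {r₀ : Fin n} (hr₀ : σ r₀ ≠ r₀) (hdiag : ∀ r, σ r ≠ r → A r r = c)
    (hpair : ∀ r, σ r ≠ r → A r r + A r (σ r) = 1)
    (htop : ∀ r, σ r ≠ r → topOf (R r) = σ r) : ¬ SDEffAt R A := by
  have hrow : ∀ r, σ r ≠ r → tradeAlong A σ c r = delta (σ r) := fun r hr =>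
    tradeAlong_apply_of_moved hA hr (hdiag r hr) (hpair r hr)
  have hdom : ∀ r, SDdom (R r) (tradeAlong A σ c r) (A r) := by
    intro r
    by_cases hr : σ r = r
    · rw [tradeAlong_apply_of_fixed hr]
      exact fun _ => le_rfl
    · rw [hrow r hr, ← htop r hr]
      exact hA.SDdom_delta_topOf (R r) r
  refine fun hEff => hEff ⟨_, bistochastic_tradeAlong hA hc.le fun r hr => (hdiag r hr).ge,
    hdom, r₀, hdom r₀, σ r₀, ?_⟩
  rw [← htop r₀ hr₀, UC_topOf, sum_singleton, sum_singleton, hrow r₀ hr₀, htop r₀ hr₀]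
  simp only [delta, if_true]
  linarith [hpair r₀ hr₀, hdiag r₀ hr₀]

end Trade
namespace ZMod

variable {k : ℕ} [NeZero k]

lemma forall_of_add_one {p : ZMod k → Prop} (j₀ : ZMod k) (h₀ : p j₀)
    (hstep : ∀ j, p j → p (j + 1)) (j : ZMod k) : p j := by
  have hreach : ∀ m : ℕ, p (j₀ + m) := by
    intro m
    induction m with
    | zero => simpa using h₀
    | succ m ih => simpa [add_assoc] using hstep _ ih
  simpa using hreach (j - j₀).val

lemma apply_eq_of_forall_apply_add_one_le {α : Type*} [PartialOrder α] {f : ZMod k → α}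
    (hf : ∀ j, f (j + 1) ≤ f j) (j j' : ZMod k) : f j = f j' := by
  have hle : ∀ j j', f j ≤ f j' := fun j j' =>
    forall_of_add_one (p := fun j => f j ≤ f j') j' le_rfl (fun j h => (hf j).trans h) j
  exact le_antisymm (hle j j') (hle j' j)

end ZMod

section Cycle

variable {n k : ℕ} [NeZero n] {i : ZMod k → Fin n}

def cycleReport (i : ZMod k → Fin n) (j : ZMod k) : Pref n :=
  topSecondPref (i (j + 1)) (i j)

lemma topOf_update_cycleReport (hinj : Function.Injective i) (hne : ∀ j, i (j + 1) ≠ i j)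
    {R : Fin n → Pref n} (htop : ∀ j, topOf (R (i j)) = i (j + 1)) (j j' : ZMod k) :
    topOf (Function.update R (i j) (cycleReport i j) (i j')) = i (j' + 1) := by
  by_cases h : j' = j
  · subst h
    rw [Function.update_self, cycleReport, topOf_topSecondPref (hne j').symm]
  · rw [Function.update_of_ne (hinj.ne h), htop j']

variable [NeZero k]

lemma eq_one_of_forall_cycleReport {R : Fin n → Pref n} {A : Matrix (Fin n) (Fin n) ℝ}
    (hA : Bistochastic A) (hEff : SDEffAt R A) (hIR : SDIRAt R A)
    (hinj : Function.Injective i) (hne : ∀ j, i (j + 1) ≠ i j)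
    (hR : ∀ j, R (i j) = cycleReport i j) (j : ZMod k) : A (i j) (i (j + 1)) = 1 := by
  have hpair : ∀ j, A (i j) (i j) + A (i j) (i (j + 1)) = 1 := by
    intro j
    have hge := (hR j ▸ hIR (i j)).one_le_add_of_topSecondPref (hne j).symm
    have hle := hA.sum_row_le_one (i j) {i j, i (j + 1)}
    rw [sum_pair (hne j).symm] at hle
    linarith
  have hconst : ∀ j, A (i j) (i j) = A (i 0) (i 0) := by
    refine fun j => ZMod.apply_eq_of_forall_apply_add_one_le (f := fun j => A (i j) (i j))
      (fun j => ?_) j 0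
    have hcol := hA.sum_col_le_one (i (j + 1)) {i j, i (j + 1)}
    rw [sum_pair (hne j).symm] at hcol
    linarith [hpair j]
  suffices hc : A (i 0) (i 0) = 0 by linarith [hpair j, hconst j]
  by_contra hc
  let σ := (Equiv.addRight (1 : ZMod k)).viaFintypeEmbedding ⟨i, hinj⟩
  have hσ : ∀ j, σ (i j) = i (j + 1) := fun j =>
    Equiv.Perm.viaFintypeEmbedding_apply_image _ ⟨i, hinj⟩ j
  have hmoved : ∀ r, σ r ≠ r → ∃ j, i j = r := fun r hr => by
    by_contra h
    exact hr (Equiv.Perm.viaFintypeEmbedding_apply_notMem_range _ _ h)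
  refine not_SDEffAt_of_tradeAlong (σ := σ) hA (lt_of_le_of_ne (hA.1 _ _) (Ne.symm hc))
    (r₀ := i 0) (by simpa [hσ] using hne 0) ?_ ?_ ?_ hEff
  · rintro r hr
    obtain ⟨j, rfl⟩ := hmoved r hr
    exact hconst j
  · rintro r hr
    obtain ⟨j, rfl⟩ := hmoved r hr
    simpa [hσ] using hpair j
  · rintro r hr
    obtain ⟨j, rfl⟩ := hmoved r hr
    rw [hσ, hR j, cycleReport, topOf_topSecondPref (hne j).symm]

def cycleDeviators (R : Fin n → Pref n) (i : ZMod k → Fin n) : Finset (ZMod k) :=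
  univ.filter fun j => R (i j) ≠ cycleReport i j

lemma cycleDeviators_update (hinj : Function.Injective i) (R : Fin n → Pref n) (j : ZMod k) :
    cycleDeviators (Function.update R (i j) (cycleReport i j)) i
      = (cycleDeviators R i).erase j := by
  ext j'
  by_cases h : j' = j
  · subst h
    simp [cycleDeviators]
  · simp [cycleDeviators, h, Function.update_of_ne (hinj.ne h)]

theorem eq_one_of_cycle_topOf {φ : (Fin n → Pref n) → Matrix (Fin n) (Fin n) ℝ}
    (hφ : ∀ P, Bistochastic (φ P))
    (hEff : ∀ P, SDEffAt P (φ P)) (hIR : ∀ P, SDIRAt P (φ P))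
    (hSP : ∀ (P : Fin n → Pref n) (a : Fin n) (P' : Pref n),
      φ (Function.update P a P') a (topOf (P a)) ≤ φ P a (topOf (P a)))
    (hinj : Function.Injective i) (hne : ∀ j, i (j + 1) ≠ i j) (R : Fin n → Pref n)
    (htop : ∀ j, topOf (R (i j)) = i (j + 1)) (j : ZMod k) :
    φ R (i j) (i (j + 1)) = 1 := by
  obtain ⟨T, hT⟩ : ∃ T, cycleDeviators R i = T := ⟨_, rfl⟩
  induction T using Finset.strongInduction generalizing R j with
  | H T ih =>
  have hdev : ∀ j ∈ T, φ R (i j) (i (j + 1)) = 1 := by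
    intro j hj
    have hsp := hSP R (i j) (cycleReport i j)
    rw [htop j, ih _ (erase_ssubset hj) _ (topOf_update_cycleReport hinj hne htop j) j
      (by rw [cycleDeviators_update hinj, hT])] at hsp
    exact le_antisymm ((hφ R).le_one _ _) hsp
  obtain rfl | ⟨j₀, hj₀⟩ := T.eq_empty_or_nonempty
  · have hR : ∀ j, R (i j) = cycleReport i j := by simpa [cycleDeviators] using hT
    exact eq_one_of_forall_cycleReport (hφ R) (hEff R) (hIR R) hinj hne hR j
  refine ZMod.forall_of_add_one (p := fun j => φ R (i j) (i (j + 1)) = 1) j₀ (hdev j₀ hj₀)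
    (fun j hj => ?_) j
  by_cases hj' : j + 1 ∈ T
  · exact hdev _ hj'
  have hR : R (i (j + 1)) = cycleReport i (j + 1) := by
    simpa [← hT, cycleDeviators] using hj'
  have hIRj := hIR R (i (j + 1))
  rw [hR] at hIRj
  exact (hφ R).eq_one_of_topSecondPref (hne j).symm (hne (j + 1)).symm hIRj hj

end Cycle

theorem stmt9 {n k : ℕ} [NeZero n] [NeZero k]
    (φ : (Fin n → Pref n) → Matrix (Fin n) (Fin n) ℝ)
    (hφ : ∀ P, Bistochastic (φ P))
    (hEff : ∀ P, SDEffAt P (φ P)) (hIR : ∀ P, SDIRAt P (φ P))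
    (hSP : ∀ (P : Fin n → Pref n) (a : Fin n) (P' : Pref n),
      φ (Function.update P a P') a (topOf (P a)) ≤ φ P a (topOf (P a)))
    (P : Fin n → Pref n) (i : ZMod k → Fin n) (hinj : Function.Injective i)
    (hcyc : ∀ j : ZMod k, topOf (P (i j)) = i (j + 1)) :
    ∀ j : ZMod k, φ P (i j) (i (j + 1)) = 1 := by
  intro j
  by_cases h1 : (1 : ZMod k) = 0
  · simp only [h1, add_zero] at hcyc ⊢
    exact le_antisymm ((hφ P).le_one _ _) ((hIR P (i j)).one_le_of_topOf_eq (hcyc j))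
  · exact eq_one_of_cycle_topOf hφ hEff hIR hSP hinj
      (fun j h => h1 (by simpa using hinj h)) P hcyc j
end

section
/- Let A be a bistochastic matrix that is SD-individually rational at profile P'_N, where each agent i in a cycle C = (i_1,...,i_k) of the top-choice graph has preference ranking her top object first and her endowment x_i second. Then the submatrix of A restricted to rows in C and columns of endowments of C is itself bistochastic (all row sums and column sums over C equal 1). -/
open Finset

theorem stmt17 {n k : ℕ} [NeZero n] [NeZero k] (P : Fin n → Pref n)
    (A : Matrix (Fin n) (Fin n) ℝ) (hA : Bistochastic A) (hIR : SDIRAt P A)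
    (i : ZMod k → Fin n) (hinj : Function.Injective i)
    (hcyc : ∀ j : ZMod k, topOf (P (i j)) = i (j + 1))
    (hsecond : ∀ j : ZMod k, ((P (i j)) (i j)).val = 1) :
    (∀ j : ZMod k, ∑ j' : ZMod k, A (i j) (i j') = 1) ∧
    (∀ j : ZMod k, ∑ j' : ZMod k, A (i j') (i j) = 1) := by
  obtain ⟨hpos, hrow, hcol⟩ := hA
  have hne : ∀ j : ZMod k, j ≠ j + 1 := by
    intro j h
    have ht : (P (i j)).symm 0 = i j := by
      have h2 := hcyc j; rw [← h] at h2; exact h2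
    have h0 : P (i j) (i j) = 0 := by
      have h3 := (P (i j)).apply_symm_apply 0
      rw [ht] at h3; exact h3
    have h1 := hsecond j
    rw [h0] at h1
    simp at h1
  have key : ∀ j : ZMod k,
      A (i j) (i (j+1)) + A (i j) (i j) = 1 ∧
      ∀ x, x ≠ i (j+1) → x ≠ i j → A (i j) x = 0 := by
    intro j
    have hte : i (j+1) ≠ i j := fun h => hne j (hinj h).symm
    have hpt : P (i j) (i (j+1)) = 0 := by
      have ht2 : (P (i j)).symm 0 = i (j+1) := hcyc j
      have h3 := (P (i j)).apply_symm_apply 0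
      rw [ht2] at h3; exact h3
    have hUC : UC (P (i j)) (i j) = {i (j+1), i j} := by
      ext y
      simp only [UC, Finset.mem_filter, Finset.mem_univ, true_and,
        Finset.mem_insert, Finset.mem_singleton]
      rw [Fin.le_def]
      constructor
      · intro h
        have h1 : (P (i j) (i j)).val = 1 := hsecond j
        rw [h1] at h
        interval_cases hv : (P (i j) y).val
        · left
          apply (P (i j)).injective
          rw [hpt]
          exact Fin.ext (by simpa using hv)
        · right
          apply (P (i j)).injective
          exact Fin.ext (by rw [hv, h1])
      · rintro (rfl | rfl)
        · simp [hpt]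
        · exact le_refl _
    have hIRj := hIR (i j) (i j)
    rw [hUC, Finset.sum_pair hte, Finset.sum_pair hte] at hIRj
    have hd : delta (i j) (i (j+1)) + delta (i j) (i j) = 1 := by
      simp [delta, hte]
    rw [hd] at hIRj
    have hsub : ({i (j+1), i j} : Finset (Fin n)) ⊆ Finset.univ := Finset.subset_univ _
    have hle : A (i j) (i (j+1)) + A (i j) (i j) ≤ 1 := by
      rw [← hrow (i j), ← Finset.sum_pair hte]
      exact Finset.sum_le_sum_of_subset_of_nonneg hsub (fun x _ _ => hpos _ _)
    have heq : A (i j) (i (j+1)) + A (i j) (i j) = 1 := le_antisymm hle hIRj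
    refine ⟨heq, ?_⟩
    intro x hx1 hx2
    have h0 : ∑ y ∈ Finset.univ \ {i (j+1), i j}, A (i j) y = 0 := by
      have hs := Finset.sum_sdiff (f := A (i j)) hsub
      rw [Finset.sum_pair hte, heq, hrow (i j)] at hs
      linarith
    have hz := (Finset.sum_eq_zero_iff_of_nonneg (fun y _ => hpos (i j) y)).mp h0 x
    apply hz
    simp [hx1, hx2]
  have rows : ∀ j : ZMod k, ∑ j' : ZMod k, A (i j) (i j') = 1 := by
    intro j
    have hs : ∑ j' : ZMod k, A (i j) (i j') =
        ∑ j' ∈ ({j, j+1} : Finset (ZMod k)), A (i j) (i j') := by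
      symm
      apply Finset.sum_subset (Finset.subset_univ _)
      intro x _ hx
      simp only [Finset.mem_insert, Finset.mem_singleton, not_or] at hx
      exact (key j).2 (i x) (fun h => hx.2 (hinj h)) (fun h => hx.1 (hinj h))
    rw [hs, Finset.sum_pair (hne j), add_comm, (key j).1]
  refine ⟨rows, ?_⟩
  have hcle : ∀ j : ZMod k, ∑ j' : ZMod k, A (i j') (i j) ≤ 1 := by
    intro j
    have him : ∑ j' : ZMod k, A (i j') (i j) = ∑ x ∈ Finset.univ.image i, A x (i j) :=
      (Finset.sum_image (f := fun x => A x (i j)) (g := i) (fun a _ b _ h => hinj h)).symm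
    rw [him, ← hcol (i j)]
    exact Finset.sum_le_sum_of_subset_of_nonneg (Finset.subset_univ _) (fun x _ _ => hpos _ _)
  have hsum : ∑ j : ZMod k, ∑ j' : ZMod k, A (i j') (i j) = (k : ℝ) := by
    rw [Finset.sum_comm]
    simp [rows, Finset.card_univ, ZMod.card]
  intro j
  have hall := (Finset.sum_eq_sum_iff_of_le (s := (Finset.univ : Finset (ZMod k)))
      (f := fun j => ∑ j' : ZMod k, A (i j') (i j)) (g := fun _ => (1:ℝ))
      (fun x _ => hcle x)).mp ?_ j (Finset.mem_univ j)
  · exact hall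
  · rw [hsum]
    simp [Finset.card_univ, ZMod.card]
end

section
/- Fix a cycle C in the top-choice graph at profile P'_N where each agent in C ranks her endowment second. Among all bistochastic matrices that are SD-individually rational at P'_N and agree with some fixed assignment outside C, the assignment giving each agent in C her top object with probability 1 SD-Pareto-dominates every other such matrix that differs on C. -/
open Finset

theorem stmt18 {n k : ℕ} [NeZero n] [NeZero k] (P : Fin n → Pref n)
    (A B : Matrix (Fin n) (Fin n) ℝ) (hA : Bistochastic A) (hAIR : SDIRAt P A)
    (i : ZMod k → Fin n) (hinj : Function.Injective i)
    (hcyc : ∀ j : ZMod k, topOf (P (i j)) = i (j + 1))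
    (hsecond : ∀ j : ZMod k, ((P (i j)) (i j)).val = 1)
    (hBin : ∀ (j : ZMod k) (x : Fin n), B (i j) x = if x = i (j + 1) then 1 else 0)
    (hBout : ∀ a : Fin n, a ∉ Set.range i → B a = A a)
    (hdiff : ∃ (j : ZMod k) (x : Fin n), A (i j) x ≠ B (i j) x) :
    Bistochastic B ∧ ParetoDom P B A := by
  classical
  -- top object has rank 0
  have hP0 : ∀ j : ZMod k, (P (i j)) (i (j + 1)) = 0 := by
    intro j
    have h := hcyc j
    unfold topOf at h
    exact ((Equiv.symm_apply_eq _).mp h).symm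
  -- the successor endowment differs
  have hne : ∀ j : ZMod k, i (j + 1) ≠ i j := by
    intro j h
    have h0 := hP0 j
    rw [h] at h0
    have := hsecond j
    rw [h0] at this
    simp at this
  -- upper contour set at the endowment
  have hUC : ∀ j : ZMod k, UC (P (i j)) (i j) = {i (j + 1), i j} := by
    intro j
    ext y
    simp only [UC, Finset.mem_filter, Finset.mem_univ, true_and, Finset.mem_insert,
      Finset.mem_singleton, Fin.le_def, hsecond j]
    constructor
    · intro h
      have h01 : ((P (i j)) y).val = 0 ∨ ((P (i j)) y).val = 1 := by omega
      rcases h01 with h0 | h1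
      · left
        apply (P (i j)).injective
        apply Fin.ext
        rw [hP0 j]
        simpa using h0
      · right
        apply (P (i j)).injective
        apply Fin.ext
        rw [h1, hsecond j]
    · rintro (rfl | rfl)
      · rw [hP0 j]; simp
      · exact le_of_eq (hsecond j)
  -- structure of rows of A on the cycle
  have hrow : ∀ j : ZMod k,
      A (i j) (i (j + 1)) + A (i j) (i j) = 1 ∧
      ∀ x, x ≠ i (j + 1) → x ≠ i j → A (i j) x = 0 := by
    intro j
    have hIR := hAIR (i j) (i j)
    have hδ : ∑ y ∈ UC (P (i j)) (i j), delta (i j) y = 1 := by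
      rw [hUC j, Finset.sum_pair (hne j)]
      simp [delta, hne j]
    rw [hδ, hUC j, Finset.sum_pair (hne j)] at hIR
    set s : Finset (Fin n) := {i (j + 1), i j} with hs
    have hsplit : ∑ x ∈ Finset.univ \ s, A (i j) x + ∑ x ∈ s, A (i j) x = 1 := by
      rw [Finset.sum_sdiff (Finset.subset_univ s)]
      exact hA.2.1 (i j)
    rw [hs, Finset.sum_pair (hne j)] at hsplit
    have hnonneg : ∀ x ∈ Finset.univ \ s, 0 ≤ A (i j) x := fun x _ => hA.1 (i j) x
    have hrest0 : ∑ x ∈ Finset.univ \ s, A (i j) x = 0 :=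
      le_antisymm (by linarith) (Finset.sum_nonneg hnonneg)
    have hzero := (Finset.sum_eq_zero_iff_of_nonneg hnonneg).mp hrest0
    constructor
    · linarith
    · intro x hx1 hx2
      apply hzero
      simp [hs, hx1, hx2]
  have hrow1 := fun j => (hrow j).1
  have hrow2 := fun j => (hrow j).2
  -- cycle column facts
  have hm1 : ∀ m : ZMod k, m - 1 + 1 = m := fun m => by ring
  have hmne : ∀ m : ZMod k, m - 1 ≠ m := by
    intro m h
    have h2 := hne (m - 1)
    rw [hm1 m] at h2
    exact h2 (congrArg i h).symm
  set R : Finset (Fin n) := Finset.univ.image i with hR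
  have hmemR : ∀ a : Fin n, a ∈ R ↔ a ∈ Set.range i := by
    intro a
    simp [hR, Set.mem_range, eq_comm]
  -- in-cycle sum over a cycle column
  have hRsum : ∀ m : ZMod k,
      ∑ a ∈ R, A a (i m) = A (i (m - 1)) (i m) + A (i m) (i m) := by
    intro m
    rw [hR, Finset.sum_image (fun x _ y _ h => hinj h)]
    rw [← Finset.sum_subset (Finset.subset_univ ({m - 1, m} : Finset (ZMod k)))]
    · rw [Finset.sum_pair (hmne m)]
    · intro j _ hj
      simp only [Finset.mem_insert, Finset.mem_singleton, not_or] at hj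
      apply hrow2 j
      · intro h
        apply hj.1
        have : m = j + 1 := hinj h
        rw [this]; ring
      · intro h
        exact hj.2 (hinj h).symm
  -- outside agents put no mass on cycle objects
  have hcolA : ∀ (m : ZMod k) (a : Fin n), a ∉ Set.range i → A a (i m) = 0 := by
    have g : ∀ m : ZMod k, ∑ a ∈ Finset.univ \ R, A a (i m)
        = A (i m) (i (m + 1)) - A (i (m - 1)) (i (m - 1 + 1)) := by
      intro m
      have hcol : ∑ a ∈ Finset.univ \ R, A a (i m) + ∑ a ∈ R, A a (i m) = 1 := by
        rw [Finset.sum_sdiff (Finset.subset_univ R)]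
        exact hA.2.2 (i m)
      rw [hRsum m] at hcol
      have h1 := hrow1 m
      rw [hm1 m]
      linarith
    have hsum0 : ∑ m : ZMod k, ∑ a ∈ Finset.univ \ R, A a (i m) = 0 := by
      simp only [g]
      rw [Finset.sum_sub_distrib]
      have : ∑ m : ZMod k, A (i (m - 1)) (i (m - 1 + 1))
          = ∑ m : ZMod k, A (i m) (i (m + 1)) :=
        Fintype.sum_equiv (Equiv.subRight (1 : ZMod k))
          (fun m => A (i (m - 1)) (i (m - 1 + 1)))
          (fun m => A (i m) (i (m + 1))) (fun m => rfl)
      rw [this]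
      ring
    have hnn : ∀ m ∈ (Finset.univ : Finset (ZMod k)),
        0 ≤ ∑ a ∈ Finset.univ \ R, A a (i m) :=
      fun m _ => Finset.sum_nonneg fun a _ => hA.1 a (i m)
    have heach := (Finset.sum_eq_zero_iff_of_nonneg hnn).mp hsum0
    intro m a ha
    have hm := heach m (Finset.mem_univ m)
    have := (Finset.sum_eq_zero_iff_of_nonneg
      (fun a _ => hA.1 a (i m))).mp hm a
    apply this
    simp only [Finset.mem_sdiff, Finset.mem_univ, true_and]
    rw [hmemR]
    exact ha
  -- B outside cycle columns agrees with A everywhere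
  have hBoutcol : ∀ c : Fin n, c ∉ Set.range i → ∀ a, B a c = A a c := by
    intro c hc a
    by_cases ha : a ∈ Set.range i
    · obtain ⟨j, rfl⟩ := ha
      have hc1 : c ≠ i (j + 1) := fun h => hc ⟨j + 1, h.symm⟩
      have hc2 : c ≠ i j := fun h => hc ⟨j, h.symm⟩
      rw [hBin j, if_neg hc1, (hrow2 j) c hc1 hc2]
    · rw [hBout a ha]
  -- Bistochasticity of B
  have hBbi : Bistochastic B := by
    refine ⟨?_, ?_, ?_⟩
    · intro a x
      by_cases ha : a ∈ Set.range i
      · obtain ⟨j, rfl⟩ := ha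
        rw [hBin j]
        split <;> norm_num
      · rw [hBout a ha]; exact hA.1 a x
    · intro a
      by_cases ha : a ∈ Set.range i
      · obtain ⟨j, rfl⟩ := ha
        simp only [hBin j]
        simp
      · rw [hBout a ha]; exact hA.2.1 a
    · intro c
      by_cases hc : c ∈ Set.range i
      · obtain ⟨m, rfl⟩ := hc
        have hsplit : ∑ a ∈ Finset.univ \ R, B a (i m) + ∑ a ∈ R, B a (i m)
            = ∑ a, B a (i m) := Finset.sum_sdiff (Finset.subset_univ R)
        have hout : ∑ a ∈ Finset.univ \ R, B a (i m) = 0 := by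
          apply Finset.sum_eq_zero
          intro a ha
          simp only [Finset.mem_sdiff, Finset.mem_univ, true_and, hmemR] at ha
          rw [hBout a ha]
          exact hcolA m a ha
        have hin : ∑ a ∈ R, B a (i m) = 1 := by
          rw [hR, Finset.sum_image (fun x _ y _ h => hinj h)]
          have hBval : ∀ j : ZMod k, B (i j) (i m) = if j = m - 1 then 1 else 0 := by
            intro j
            rw [hBin j]
            by_cases hj : j = m - 1
            · subst hj
              rw [hm1 m, if_pos rfl, if_pos rfl]
            · rw [if_neg hj, if_neg]
              intro h
              apply hj
              have : m = j + 1 := hinj h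
              rw [this]; ring
          simp only [hBval]
          simp
        rw [← hsplit, hout, hin]
        norm_num
      · calc ∑ a, B a c = ∑ a, A a c := Finset.sum_congr rfl fun a _ => hBoutcol c hc a
          _ = 1 := hA.2.2 c
  -- SD-dominance for every agent
  have hdom : ∀ a, SDdom (P a) (B a) (A a) := by
    intro a
    by_cases ha : a ∈ Set.range i
    · obtain ⟨j, rfl⟩ := ha
      intro x
      have hBsum : ∑ y ∈ UC (P (i j)) x, B (i j) y = 1 := by
        simp only [hBin j]
        rw [Finset.sum_ite_eq' (UC (P (i j)) x) (i (j + 1)) (fun _ => (1 : ℝ))]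
        rw [if_pos]
        simp only [UC, Finset.mem_filter, Finset.mem_univ, true_and]
        rw [hP0 j, Fin.le_def]
        simp
      rw [hBsum]
      calc ∑ y ∈ UC (P (i j)) x, A (i j) y
          ≤ ∑ y, A (i j) y :=
            Finset.sum_le_sum_of_subset_of_nonneg (Finset.subset_univ _)
              (fun y _ _ => hA.1 (i j) y)
        _ = 1 := hA.2.1 (i j)
    · rw [hBout a ha]
      intro x
      exact le_refl _
  refine ⟨hBbi, hdom, ?_⟩
  -- strictness
  obtain ⟨j, x, hx⟩ := hdiff
  have hlt : A (i j) (i (j + 1)) < 1 := by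
    by_cases hx1 : x = i (j + 1)
    · subst hx1
      rw [hBin j, if_pos rfl] at hx
      exact lt_of_le_of_ne (by linarith [hrow1 j, hA.1 (i j) (i j)]) hx
    · rw [hBin j, if_neg hx1] at hx
      by_cases hx2 : x = i j
      · subst hx2
        have hpos : 0 < A (i j) (i j) := lt_of_le_of_ne (hA.1 (i j) (i j)) (Ne.symm hx)
        linarith [hrow1 j]
      · exact absurd ((hrow2 j) x hx1 hx2) hx
  refine ⟨i j, hdom (i j), i (j + 1), ?_⟩
  have hUCtop : UC (P (i j)) (i (j + 1)) = {i (j + 1)} := by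
    ext y
    simp only [UC, Finset.mem_filter, Finset.mem_univ, true_and, Finset.mem_singleton,
      Fin.le_def, hP0 j]
    constructor
    · intro h
      apply (P (i j)).injective
      apply Fin.ext
      rw [hP0 j]
      simp only [Fin.val_zero] at h ⊢
      omega
    · rintro rfl
      rw [hP0 j]
  rw [hUCtop, Finset.sum_singleton, Finset.sum_singleton, hBin j, if_pos rfl]
  exact hlt
end
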